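/- arXiv:2502.05123 — 4 statements merged into one kernel-verified Lean document; each statement's English description precedes it below -/
import Mathlib

section
/- Fix M ≥ 3 and N ≥ 1. For every tuple of natural numbers (n₁,…,n_N) with Σ_{i=1}^N i·nᵢ = N, there exists a nonzero homogeneous polynomial p of degree N in ℂ[x₁,…,x_M] admitting a factorization into irreducible homogeneous polynomials which contains, for each i ∈ {1,…,N}, exactly nᵢ irreducible factors of degree i (counted with multiplicity). Consequently, the number of nonempty classes [1^{n₁} … N^{n_N}]_M equals the number of integer partitions of N. -/
open MvPolynomial


private lemma mv_eq_C_of_totalDegree_eq_zero {σ R : Type*} [CommSemiring R]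
    {p : MvPolynomial σ R} (h : p.totalDegree = 0) : p = MvPolynomial.C (p.coeff 0) := by
  rw [MvPolynomial.totalDegree_eq_zero_iff] at h
  classical
  ext m
  rcases eq_or_ne m 0 with rfl | hm
  · simp
  · rw [MvPolynomial.coeff_C, if_neg (Ne.symm hm)]
    by_contra hc
    obtain ⟨x, hx⟩ := Finsupp.ne_iff.mp hm
    exact hx (h m (MvPolynomial.mem_support_iff.mpr hc) x)

private lemma mv_prime_X {k : ℕ} (i : Fin (k + 1)) :
    Prime (MvPolynomial.X i : MvPolynomial (Fin (k + 1)) ℂ) := by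
  let e := (MvPolynomial.renameEquiv ℂ (Equiv.swap i 0)).trans (MvPolynomial.finSuccEquiv ℂ k)
  rw [← MulEquiv.prime_iff e.toMulEquiv]
  show Prime (e (MvPolynomial.X i))
  have : e (MvPolynomial.X i) = Polynomial.X := by
    simp [e, Equiv.swap_apply_left, MvPolynomial.finSuccEquiv_X_zero]
  rw [this]  
  exact Polynomial.prime_X

private lemma mv_isUnit_of_dvd_X_pow {k : ℕ} {i j : Fin (k + 1)} (hij : i ≠ j) {e d : ℕ}
    (hd : d ≠ 0) (r : MvPolynomial (Fin (k + 1)) ℂ)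
    (h1 : r ∣ MvPolynomial.X i ^ e) (h2 : r ∣ MvPolynomial.X j ^ d) : IsUnit r := by
  rcases Nat.eq_zero_or_pos e with rfl | he
  · exact isUnit_of_dvd_one (by simpa using h1)
  by_contra hr
  have hr0 : r ≠ 0 := by
    rintro rfl
    exact pow_ne_zero e (MvPolynomial.X_ne_zero i) (zero_dvd_iff.mp h1)
  obtain ⟨π, hπirr, hπr⟩ := WfDvdMonoid.exists_irreducible_factor hr hr0
  have hπ : Prime π := hπirr.prime
  have hπi : π ∣ MvPolynomial.X i := hπ.dvd_of_dvd_pow (hπr.trans h1)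
  have hπj : π ∣ MvPolynomial.X j := hπ.dvd_of_dvd_pow (hπr.trans h2)
  obtain ⟨t, ht⟩ := hπi
  rcases (mv_prime_X i).irreducible.isUnit_or_isUnit ht with hu | hu
  · exact hπirr.not_isUnit hu
  · obtain ⟨u, rfl⟩ := hu
    have hXi_dvd : MvPolynomial.X i ∣ MvPolynomial.X j :=
      dvd_trans ⟨(u⁻¹ : _), by rw [ht, mul_assoc, u.mul_inv, mul_one]⟩ hπj
    have := (MvPolynomial.eval (fun x => if x = j then (1 : ℂ) else 0)).map_dvd hXi_dvd
    simp [if_neg hij] at this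


private lemma linear_irreducible' {R : Type*} [CommRing R] [IsDomain R] {a b : R} (ha : a ≠ 0)
    (h : ∀ r : R, r ∣ a → r ∣ b → IsUnit r) :
    Irreducible (Polynomial.C a * Polynomial.X + Polynomial.C b) := by
  set g : Polynomial R := Polynomial.C a * Polynomial.X + Polynomial.C b with hg
  have hdeg : g.natDegree = 1 := Polynomial.natDegree_linear ha
  have hg0 : g ≠ 0 := fun h0 => by simp [h0] at hdeg
  have hc1 : g.coeff 1 = a := by simp [hg]
  have hc0 : g.coeff 0 = b := by simp [hg]
  have key : ∀ w z : Polynomial R, g = w * z → w.natDegree = 0 → IsUnit w := by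
    intro w z hwz hw
    obtain ⟨r, hr⟩ := Polynomial.natDegree_eq_zero.mp hw
    have h1 : r ∣ a := ⟨z.coeff 1, by rw [← hc1, hwz, ← hr, Polynomial.coeff_C_mul]⟩
    have h0 : r ∣ b := ⟨z.coeff 0, by rw [← hc0, hwz, ← hr, Polynomial.coeff_C_mul]⟩
    rw [← hr]
    exact Polynomial.isUnit_C.mpr (h r h1 h0)
  constructor
  · intro hu
    have := Polynomial.natDegree_eq_zero_of_isUnit hu
    omega
  · intro u v huv
    have hu0 : u ≠ 0 := fun h0 => hg0 (by rw [huv, h0, zero_mul])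
    have hv0 : v ≠ 0 := fun h0 => hg0 (by rw [huv, h0, mul_zero])
    have hsum : u.natDegree + v.natDegree = 1 := by
      rw [← Polynomial.natDegree_mul hu0 hv0, ← huv, hdeg]
    rcases Nat.eq_zero_or_pos u.natDegree with hcase | hcase
    · exact Or.inl (key u v huv hcase)
    · exact Or.inr (key v u (by rw [huv, mul_comm]) (by omega))


private lemma irred_homog (m d : ℕ) (hd : 1 ≤ d) :
    Irreducible (MvPolynomial.X 1 ^ (d - 1) * MvPolynomial.X 0 + MvPolynomial.X 2 ^ d :
      MvPolynomial (Fin (m + 3)) ℂ) ∧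
    (MvPolynomial.X 1 ^ (d - 1) * MvPolynomial.X 0 + MvPolynomial.X 2 ^ d :
      MvPolynomial (Fin (m + 3)) ℂ).IsHomogeneous d := by
  constructor
  · rw [← MulEquiv.irreducible_iff (MvPolynomial.finSuccEquiv ℂ (m + 2)).toMulEquiv]
    show Irreducible ((MvPolynomial.finSuccEquiv ℂ (m + 2))
      (MvPolynomial.X 1 ^ (d - 1) * MvPolynomial.X 0 + MvPolynomial.X 2 ^ d))
    have h1 : (1 : Fin (m + 3)) = Fin.succ 0 := by simp [Fin.ext_iff]
    have h2 : (2 : Fin (m + 3)) = Fin.succ 1 := by simp [Fin.ext_iff]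
    rw [h1, h2, map_add, map_mul, map_pow, map_pow, MvPolynomial.finSuccEquiv_X_zero,
      MvPolynomial.finSuccEquiv_X_succ, MvPolynomial.finSuccEquiv_X_succ,
      ← Polynomial.C_pow, ← Polynomial.C_pow]
    refine linear_irreducible' (pow_ne_zero _ (MvPolynomial.X_ne_zero _)) ?_
    intro r hr1 hr2
    exact mv_isUnit_of_dvd_X_pow (i := 0) (j := 1) (by simp [Fin.ext_iff])
      (by omega : d ≠ 0) r hr1 hr2
  · have hmul : (MvPolynomial.X 1 ^ (d - 1) * MvPolynomial.X 0 :
        MvPolynomial (Fin (m + 3)) ℂ).IsHomogeneous d := by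
      have := (MvPolynomial.isHomogeneous_X_pow (1 : Fin (m + 3)) (d - 1) (R := ℂ)).mul
        (MvPolynomial.isHomogeneous_X (R := ℂ) (0 : Fin (m + 3)))
      rwa [Nat.sub_add_cancel hd] at this
    exact hmul.add (MvPolynomial.isHomogeneous_X_pow _ _)


private lemma count_repl {N : ℕ} (n : Fin N → ℕ) {β : Type*} [DecidableEq β] (g : Fin N → β)
    (hg : Function.Injective g) (i : Fin N) :
    Multiset.count (g i) (∑ j : Fin N, Multiset.replicate (n j) (g j)) = n i := by
  rw [Multiset.count_sum']
  rw [Finset.sum_eq_single i]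
  · simp
  · intro j _ hj
    rw [Multiset.count_replicate, if_neg (fun h => hj (hg h))]
  · simp

private lemma sum_count_eq {N : ℕ} (T : Multiset ℕ) (hT : ∀ a ∈ T, 1 ≤ a ∧ a ≤ N) :
    ∑ i : Fin N, (i.val + 1) * T.count (i.val + 1) = T.sum := by
  induction T using Multiset.induction with
  | empty => simp
  | cons a T ih =>
    obtain ⟨ha1, haN⟩ := hT a (Multiset.mem_cons_self a T)
    have ih' := ih (fun b hb => hT b (Multiset.mem_cons_of_mem hb))
    simp only [Multiset.count_cons, Multiset.sum_cons]
    have hsplit : ∀ i : Fin N, (i.val + 1) * (T.count (i.val + 1)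
        + (if i.val + 1 = a then 1 else 0))
        = (i.val + 1) * T.count (i.val + 1)
          + (if i = (⟨a - 1, by omega⟩ : Fin N) then a else 0) := by
      intro i
      rcases eq_or_ne (i.val + 1) a with h | h
      · rw [if_pos h, if_pos (by simp [Fin.ext_iff]; omega)]
        rw [mul_add, mul_one, h]
      · rw [if_neg h, if_neg (fun hc => h (by rw [hc]; simp; omega))]
        simp
    rw [Finset.sum_congr rfl (fun i _ => hsplit i), Finset.sum_add_distrib, ih',
      Finset.sum_ite_eq' Finset.univ]
    simp [add_comm]

private def tuplesEquivPartitions (N : ℕ) :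
    {n : Fin N → ℕ | ∑ i : Fin N, (i.val + 1) * n i = N} ≃ Nat.Partition N where
  toFun n := ⟨∑ i : Fin N, Multiset.replicate (n.1 i) (i.val + 1),
    by
      intro a ha
      rw [Multiset.mem_sum] at ha
      obtain ⟨i, _, hi⟩ := ha
      rw [Multiset.eq_of_mem_replicate hi]
      omega,
    by
      have : (∑ i : Fin N, Multiset.replicate (n.1 i) (i.val + 1)).sum
          = ∑ i : Fin N, (Multiset.replicate (n.1 i) (i.val + 1)).sum :=
        map_sum Multiset.sumAddMonoidHom _ _
      rw [this]
      simp only [Multiset.sum_replicate, smul_eq_mul]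
      calc ∑ i : Fin N, n.1 i * (i.val + 1)
          = ∑ i : Fin N, (i.val + 1) * n.1 i := Finset.sum_congr rfl (fun i _ => Nat.mul_comm _ _)
        _ = N := n.2⟩
  invFun P := ⟨fun i => P.parts.count (i.val + 1),
    by
      have h := sum_count_eq P.parts (fun a ha => ⟨P.parts_pos ha, by
        have : a ≤ P.parts.sum := by
          conv_rhs => rw [← Multiset.cons_erase ha]
          rw [Multiset.sum_cons]
          exact Nat.le_add_right _ _
        rw [P.parts_sum] at this
        exact this⟩)
      rw [P.parts_sum] at h
      exact h⟩
  left_inv := by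
    rintro ⟨n, hn⟩
    ext i
    exact count_repl n (fun j => j.val + 1) (fun x y h => by
      simpa [Fin.ext_iff] using h) i
  right_inv := by
    rintro ⟨parts, hpos, hsum⟩
    ext a
    simp only
    rcases Classical.em (1 ≤ a ∧ a ≤ N) with ⟨h1, h2⟩ | h
    · have : a = (⟨a - 1, by omega⟩ : Fin N).val + 1 := by simp; omega
      rw [this]
      exact count_repl (fun i => parts.count (i.val + 1)) (fun j => j.val + 1)
        (fun x y h => by simpa [Fin.ext_iff] using h) _
    · have hL : Multiset.count a (∑ i : Fin N,
          Multiset.replicate (parts.count (i.val + 1)) (i.val + 1)) = 0 := by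
        rw [Multiset.count_sum']
        refine Finset.sum_eq_zero (fun i _ => ?_)
        rw [Multiset.count_replicate, if_neg (fun hc => h ⟨by omega, by omega⟩)]
      have hR : Multiset.count a parts = 0 := by
        rw [Multiset.count_eq_zero]
        intro hmem
        have h1 : 0 < a := hpos hmem
        have h2 : a ≤ parts.sum := by
          conv_rhs => rw [← Multiset.cons_erase hmem]
          rw [Multiset.sum_cons]; exact Nat.le_add_right _ _
        rw [hsum] at h2
        exact h ⟨h1, h2⟩
      rw [hL, hR]


private lemma homog_prod' {σ : Type*} (s : Multiset (MvPolynomial σ ℂ))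
    (h : ∀ q ∈ s, q.IsHomogeneous q.totalDegree) :
    s.prod.IsHomogeneous (s.map MvPolynomial.totalDegree).sum := by
  induction s using Multiset.induction with
  | empty => simpa using MvPolynomial.isHomogeneous_one σ ℂ
  | cons a t ih =>
    rw [Multiset.prod_cons, Multiset.map_cons, Multiset.sum_cons]
    exact (h a (Multiset.mem_cons_self a t)).mul
      (ih (fun q hq => h q (Multiset.mem_cons_of_mem hq)))

private lemma realize (M N : ℕ) (hM : 3 ≤ M) (hN : 1 ≤ N) (n : Fin N → ℕ)
    (hn : (∑ i : Fin N, (i.val + 1) * n i) = N) :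
    ∃ (p : MvPolynomial (Fin M) ℂ) (c : ℂ) (s : Multiset (MvPolynomial (Fin M) ℂ)),
      p ≠ 0 ∧ p.IsHomogeneous N ∧ c ≠ 0 ∧ p = MvPolynomial.C c * s.prod ∧
      (∀ q ∈ s, Irreducible q ∧ q.IsHomogeneous q.totalDegree) ∧
      (∀ i : Fin N, (s.map MvPolynomial.totalDegree).count (i.val + 1) = n i) := by
  obtain ⟨m, rfl⟩ : ∃ m, M = m + 3 := ⟨M - 3, by omega⟩
  -- the basic irreducible homogeneous polynomial of degree d (for d ≥ 1)
  set f : ℕ → MvPolynomial (Fin (m + 3)) ℂ := fun d =>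
    MvPolynomial.X 1 ^ (d - 1) * MvPolynomial.X 0 + MvPolynomial.X 2 ^ d with hf
  have hfi : ∀ d, 1 ≤ d → Irreducible (f d) ∧ (f d).IsHomogeneous d := fun d hd =>
    irred_homog m d hd
  set s : Multiset (MvPolynomial (Fin (m + 3)) ℂ) :=
    ∑ i : Fin N, Multiset.replicate (n i) (f (i.val + 1)) with hs
  have hmem : ∀ q ∈ s, ∃ i : Fin N, q = f (i.val + 1) := by
    intro q hq
    rw [hs, Multiset.mem_sum] at hq
    obtain ⟨i, _, hi⟩ := hq
    exact ⟨i, Multiset.eq_of_mem_replicate hi⟩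
  have hqs : ∀ q ∈ s, Irreducible q ∧ q.IsHomogeneous q.totalDegree := by
    intro q hq
    obtain ⟨i, rfl⟩ := hmem q hq
    obtain ⟨hirr, hhom⟩ := hfi (i.val + 1) (Nat.le_add_left 1 _)
    have htd : (f (i.val + 1)).totalDegree = i.val + 1 := hhom.totalDegree hirr.ne_zero
    exact ⟨hirr, by rw [htd]; exact hhom⟩
  have hmap : s.map MvPolynomial.totalDegree
      = ∑ i : Fin N, Multiset.replicate (n i) (i.val + 1) := by
    rw [hs]
    show (Multiset.mapAddMonoidHom MvPolynomial.totalDegree)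
      (∑ i : Fin N, Multiset.replicate (n i) (f (i.val + 1))) = _
    rw [map_sum]
    refine Finset.sum_congr rfl (fun i _ => ?_)
    show (Multiset.replicate (n i) (f (i.val + 1))).map MvPolynomial.totalDegree = _
    rw [Multiset.map_replicate]
    congr 1
    obtain ⟨hirr, hhom⟩ := hfi (i.val + 1) (Nat.le_add_left 1 _)
    exact hhom.totalDegree hirr.ne_zero
  have hsum : (s.map MvPolynomial.totalDegree).sum = N := by
    rw [hmap]
    have : (∑ i : Fin N, Multiset.replicate (n i) (i.val + 1)).sum
        = ∑ i : Fin N, (Multiset.replicate (n i) (i.val + 1)).sum :=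
      map_sum Multiset.sumAddMonoidHom _ _
    rw [this]
    simp only [Multiset.sum_replicate, smul_eq_mul]
    calc ∑ i : Fin N, n i * (i.val + 1)
        = ∑ i : Fin N, (i.val + 1) * n i := Finset.sum_congr rfl (fun i _ => Nat.mul_comm _ _)
      _ = N := hn
  refine ⟨s.prod, 1, s, ?_, ?_, one_ne_zero, by rw [map_one, one_mul], hqs, ?_⟩
  · exact Multiset.prod_ne_zero (fun h0 => (hqs 0 h0).1.ne_zero rfl)
  · have := homog_prod' s (fun q hq => (hqs q hq).2)
    rwa [hsum] at this
  · intro i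
    rw [hmap]
    exact count_repl n (fun j => j.val + 1) (fun x y h => by simpa [Fin.ext_iff] using h) i

private lemma unrealize (M N : ℕ) (n : Fin N → ℕ)
    (h : ∃ (p : MvPolynomial (Fin M) ℂ) (c : ℂ) (s : Multiset (MvPolynomial (Fin M) ℂ)),
      p ≠ 0 ∧ p.IsHomogeneous N ∧ c ≠ 0 ∧ p = MvPolynomial.C c * s.prod ∧
      (∀ q ∈ s, Irreducible q ∧ q.IsHomogeneous q.totalDegree) ∧
      (∀ i : Fin N, (s.map MvPolynomial.totalDegree).count (i.val + 1) = n i)) :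
    (∑ i : Fin N, (i.val + 1) * n i) = N := by
  obtain ⟨p, c, s, hp0, hph, hc0, hpeq, hqs, hcount⟩ := h
  have hprod : s.prod.IsHomogeneous (s.map MvPolynomial.totalDegree).sum :=
    homog_prod' s (fun q hq => (hqs q hq).2)
  have hph' : p.IsHomogeneous (s.map MvPolynomial.totalDegree).sum := by
    rw [hpeq]
    have := (MvPolynomial.isHomogeneous_C (σ := Fin M) c).mul hprod
    rwa [zero_add] at this
  have hNsum : N = (s.map MvPolynomial.totalDegree).sum := hph.inj_right hph' hp0
  have hbound : ∀ a ∈ s.map MvPolynomial.totalDegree, 1 ≤ a ∧ a ≤ N := by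
    intro a ha
    obtain ⟨q, hq, rfl⟩ := Multiset.mem_map.mp ha
    constructor
    · by_contra hlt
      have h0 : q.totalDegree = 0 := by omega
      have hq0 : q ≠ 0 := (hqs q hq).1.ne_zero
      have hqC : q = MvPolynomial.C (q.coeff 0) := mv_eq_C_of_totalDegree_eq_zero h0
      have hcoeff : q.coeff 0 ≠ 0 := fun hc => hq0 (by rw [hqC, hc, map_zero])
      exact (hqs q hq).1.not_isUnit
        (hqC ▸ (isUnit_iff_ne_zero.mpr hcoeff).map (MvPolynomial.C : ℂ →+* _))
    · rw [hNsum]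
      conv_rhs => rw [← Multiset.cons_erase ha]
      rw [Multiset.sum_cons]
      exact Nat.le_add_right _ _
  calc ∑ i : Fin N, (i.val + 1) * n i
      = ∑ i : Fin N, (i.val + 1) * (s.map MvPolynomial.totalDegree).count (i.val + 1) :=
        Finset.sum_congr rfl (fun i _ => by rw [hcount i])
    _ = (s.map MvPolynomial.totalDegree).sum := sum_count_eq _ hbound
    _ = N := hNsum.symm

/-- For `M ≥ 3` and `N ≥ 1`: every tuple `(n₁,…,n_N)` with `∑ i·nᵢ = N` is realized by a
nonzero homogeneous polynomial of degree `N` in `ℂ[x₁,…,x_M]` whose factorization into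
irreducible homogeneous polynomials contains exactly `nᵢ` irreducible factors of degree `i`
(with multiplicity); consequently, the number of nonempty classes equals the number of
integer partitions of `N`. -/
theorem nonempty_classes_eq_partitions (M N : ℕ) (hM : 3 ≤ M) (hN : 1 ≤ N) :
    (∀ n : Fin N → ℕ, (∑ i : Fin N, (i.val + 1) * n i) = N →
      ∃ (p : MvPolynomial (Fin M) ℂ) (c : ℂ) (s : Multiset (MvPolynomial (Fin M) ℂ)),
        p ≠ 0 ∧ p.IsHomogeneous N ∧ c ≠ 0 ∧ p = MvPolynomial.C c * s.prod ∧
        (∀ q ∈ s, Irreducible q ∧ q.IsHomogeneous q.totalDegree) ∧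
        (∀ i : Fin N, (s.map MvPolynomial.totalDegree).count (i.val + 1) = n i)) ∧
    Set.ncard {n : Fin N → ℕ |
      ∃ (p : MvPolynomial (Fin M) ℂ) (c : ℂ) (s : Multiset (MvPolynomial (Fin M) ℂ)),
        p ≠ 0 ∧ p.IsHomogeneous N ∧ c ≠ 0 ∧ p = MvPolynomial.C c * s.prod ∧
        (∀ q ∈ s, Irreducible q ∧ q.IsHomogeneous q.totalDegree) ∧
        (∀ i : Fin N, (s.map MvPolynomial.totalDegree).count (i.val + 1) = n i)}
      = Fintype.card (Nat.Partition N) := by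
  refine ⟨realize M N hM hN, ?_⟩
  have hset : {n : Fin N → ℕ |
      ∃ (p : MvPolynomial (Fin M) ℂ) (c : ℂ) (s : Multiset (MvPolynomial (Fin M) ℂ)),
        p ≠ 0 ∧ p.IsHomogeneous N ∧ c ≠ 0 ∧ p = MvPolynomial.C c * s.prod ∧
        (∀ q ∈ s, Irreducible q ∧ q.IsHomogeneous q.totalDegree) ∧
        (∀ i : Fin N, (s.map MvPolynomial.totalDegree).count (i.val + 1) = n i)}
      = {n : Fin N → ℕ | ∑ i : Fin N, (i.val + 1) * n i = N} := by
    ext n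
    exact ⟨unrealize M N n, realize M N hM hN n⟩
  rw [hset, ← Nat.card_coe_set_eq, Nat.card_congr (tuplesEquivPartitions N),
    Nat.card_eq_fintype_card]
end

section
/- Fix natural numbers M ≥ 1 and N ≥ 1 satisfying M·N + N < C(M+N−2, M−1). Then there exists a homogeneous polynomial q of degree N−1 in ℂ[x₁,…,x_M] that is not of the form Σ_{i=1}^N γᵢ · ∏_{k=1, k≠i}^N ℓ_k for any choice of scalars γ₁,…,γ_N ∈ ℂ and linear forms ℓ₁,…,ℓ_N where ℓ_k = Σ_{j=1}^M α_{j,k} xⱼ with α_{j,k} ∈ ℂ. Equivalently, the map T: ℂ^N × ℂ^{M×N} → ℂ[x₁,…,x_M]_{N−1}, (γ, α) ↦ Σᵢ γᵢ ∏_{k≠i} (Σⱼ α_{j,k} xⱼ), is not surjective onto the homogeneous polynomials of degree N−1. -/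
open MvPolynomial

/-- A polynomial of total degree at most `K` lies in the span of the monomials with all
exponents at most `K`. -/
private lemma box_mem_span {σ : Type*} [Fintype σ] {K : ℕ} {p : MvPolynomial σ ℂ}
    (hp : p.totalDegree ≤ K) :
    p ∈ Submodule.span ℂ
      (Set.range fun m : σ → Fin (K + 1) => ∏ i, (X i : MvPolynomial σ ℂ) ^ (m i : ℕ)) := by
  classical
  rw [p.as_sum]
  refine Submodule.sum_mem _ fun v hv => ?_
  have hvK : ∀ i, v i ≤ K := by
    intro i
    refine le_trans ?_ (le_trans (le_totalDegree hv) hp)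
    by_cases h : i ∈ v.support
    · exact Finset.single_le_sum (f := fun i => v i) (fun _ _ => Nat.zero_le _) h
    · simp [Finsupp.notMem_support_iff.mp h]
  have hprod : ∏ i : σ, (X i : MvPolynomial σ ℂ) ^ (v i) = monomial v 1 := by
    rw [← prod_X_pow_eq_monomial]
    exact (Finset.prod_subset (Finset.subset_univ _) (by
      intro i _ hi
      rw [Finsupp.notMem_support_iff.mp hi, pow_zero])).symm
  have hmono : (monomial v) (coeff v p) =
      coeff v p • ∏ i : σ, (X i : MvPolynomial σ ℂ) ^ (v i) := by
    rw [hprod, smul_eq_C_mul, C_mul_monomial, mul_one]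
  rw [hmono]
  exact Submodule.smul_mem _ _ (Submodule.subset_span
    ⟨fun i => ⟨v i, Nat.lt_succ_of_le (hvK i)⟩, rfl⟩)

/-- A family of `D` polynomial functions on `ℂ^σ`, each of degree at most `d`, with
`card σ < D`, cannot be jointly surjective onto `ℂ^D`. -/
private lemma not_polynomial_surjective {σ : Type*} [Fintype σ] {D d : ℕ} (hd : 1 ≤ d)
    (hD : Fintype.card σ < D) (F : Fin D → MvPolynomial σ ℂ)
    (hdeg : ∀ j, (F j).totalDegree ≤ d)
    (hsurj : ∀ v : Fin D → ℂ, ∃ x : σ → ℂ, ∀ j, eval x (F j) = v j) : False := by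
  classical
  set n := Fintype.card σ with hn
  set t := (d * D) ^ n with ht
  set K := d * D * t with hK
  set g : (Fin D → Fin (t + 1)) → MvPolynomial σ ℂ := fun β => ∏ j, F j ^ (β j : ℕ) with hg
  have hD0 : 0 < D := lt_of_le_of_lt (Nat.zero_le n) hD
  have hdD : 1 ≤ d * D := Nat.mul_pos hd hD0
  have hgdeg : ∀ β, (g β).totalDegree ≤ K := by
    intro β
    calc (g β).totalDegree ≤ ∑ j, (F j ^ (β j : ℕ)).totalDegree :=
          totalDegree_finset_prod _ _
      _ ≤ ∑ _j : Fin D, t * d := Finset.sum_le_sum fun j _ =>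
          le_trans (totalDegree_pow _ _)
            (Nat.mul_le_mul (Nat.lt_succ_iff.mp (β j).isLt) (hdeg j))
      _ = D * (t * d) := by simp [Finset.sum_const, mul_comm]
      _ = K := by rw [hK]; ring
  -- numeric inequality : (K+1)^n < (t+1)^D
  have hnum : (K + 1) ^ n < (t + 1) ^ D := by
    have h1 : K + 1 ≤ d * D * (t + 1) := by
      rw [hK, Nat.mul_succ]
      exact Nat.add_le_add_left hdD _
    have hApos : 0 < (t + 1) ^ n := pow_pos (Nat.succ_pos t) n
    calc (K + 1) ^ n ≤ (d * D * (t + 1)) ^ n := Nat.pow_le_pow_left h1 n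
      _ = t * (t + 1) ^ n := by rw [mul_pow, ht]
      _ < (t + 1) ^ (n + 1) := by rw [pow_succ]; nlinarith
      _ ≤ (t + 1) ^ D := Nat.pow_le_pow_right (Nat.le_add_left _ _) hD
  -- the g β are linearly dependent
  have hnotLI : ¬ LinearIndependent ℂ g := by
    intro hLI
    have hr : Set.range g ≤ Submodule.span ℂ
        (Set.range fun m : σ → Fin (K + 1) => ∏ i, (X i : MvPolynomial σ ℂ) ^ (m i : ℕ)) := by
      rintro _ ⟨β, rfl⟩
      exact box_mem_span (hgdeg β)
    have hcard := linearIndependent_le_span' g hLI _ hr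
    rw [Cardinal.mk_fintype] at hcard
    have hcard2 : Fintype.card (Fin D → Fin (t + 1)) ≤
        Fintype.card (σ → Fin (K + 1)) := by
      exact_mod_cast hcard.trans (Nat.cast_le.mpr (Fintype.card_range_le _))
    rw [Fintype.card_fun, Fintype.card_fun] at hcard2
    simp only [Fintype.card_fin, ← hn] at hcard2
    exact absurd hcard2 (not_le.mpr hnum)
  obtain ⟨c, hsum, β₀, hc⟩ := Fintype.not_linearIndependent_iff.mp hnotLI
  -- build the annihilating polynomial
  set e : (Fin D → Fin (t + 1)) → (Fin D →₀ ℕ) :=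
    fun β => Finsupp.equivFunOnFinite.symm fun j => (β j : ℕ) with he
  have heinj : Function.Injective e := by
    intro β₁ β₂ hday
    have := Finsupp.equivFunOnFinite.symm.injective hday
    funext j
    exact Fin.val_injective (congrFun this j)
  set P : MvPolynomial (Fin D) ℂ := ∑ β, monomial (e β) (c β) with hP
  have hPF : aeval F P = 0 := by
    rw [hP, map_sum]
    rw [← hsum]
    refine Finset.sum_congr rfl fun β _ => ?_
    rw [aeval_monomial, Finsupp.prod_fintype _ _ (fun j => pow_zero _)]
    simp only [he, Finsupp.coe_equivFunOnFinite_symm, Algebra.smul_def, hg]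
  have hP0 : P = 0 := by
    apply MvPolynomial.funext
    intro v
    obtain ⟨x, hx⟩ := hsurj v
    have h1 : eval x (aeval F P) = 0 := by rw [hPF]; simp
    rw [aeval_def, eval₂_comp_left (eval x) (algebraMap ℂ (MvPolynomial σ ℂ)) F P] at h1
    have h2 : (eval x).comp (algebraMap ℂ (MvPolynomial σ ℂ)) = RingHom.id ℂ := by
      ext a; simp [algebraMap_eq]
    have h3 : (⇑(eval x) ∘ F) = v := funext hx
    rw [h2, h3] at h1
    rw [map_zero]
    exact h1
  have hcoeff : coeff (e β₀) P = c β₀ := by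
    rw [hP, coeff_sum]
    rw [Finset.sum_eq_single β₀]
    · rw [coeff_monomial, if_pos rfl]
    · intro β _ hne
      rw [coeff_monomial, if_neg (fun hcontra => hne (heinj hcontra))]
    · intro habs
      exact absurd (Finset.mem_univ β₀) habs
  rw [hP0] at hcoeff
  simp only [coeff_zero] at hcoeff
  exact hc hcoeff.symm

/-- Theorem 3 of the paper (non-universality of a single annihilation): if
`M·N + N < C(M+N-2, M-1)`, then there is a homogeneous polynomial of degree `N-1` in
`ℂ[x₁,…,x_M]` that is not of the form `Σᵢ γᵢ ∏_{k≠i} ℓₖ` for scalars `γᵢ` and linear forms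
`ℓₖ = Σⱼ α_{j,k} xⱼ`; i.e., the map `T` is not surjective onto the homogeneous degree-`N-1`
polynomials. -/
theorem single_annihilation_not_universal (M N : ℕ) (hM : 1 ≤ M) (hN : 1 ≤ N)
    (h : M * N + N < (M + N - 2).choose (M - 1)) :
    ∃ q : MvPolynomial (Fin M) ℂ, q.IsHomogeneous (N - 1) ∧
      ∀ (γ : Fin N → ℂ) (α : Fin M → Fin N → ℂ),
        q ≠ ∑ i : Fin N, MvPolynomial.C (γ i) *
          ∏ k ∈ Finset.univ.erase i, (∑ j : Fin M, MvPolynomial.C (α j k) * X j) := by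
  classical
  by_contra hcon
  push_neg at hcon
  -- hcon : ∀ q, IsHomogeneous q (N-1) → ∃ γ α, q = ...
  set σ' := (Fin N ⊕ Fin M × Fin N) with hσ'
  have hcardσ : Fintype.card σ' = N + M * N := by simp [hσ', mul_comm]
  set D := N + M * N + 1 with hD
  -- D distinct monomial exponents of degree N - 1
  have hsymcard : Fintype.card (Fin D) ≤ Fintype.card (Sym (Fin M) (N - 1)) := by
    rw [Sym.card_sym_eq_choose, Fintype.card_fin, Fintype.card_fin]
    have h2 : M + (N - 1) - 1 = M + N - 2 := by omega
    have h3 : (M + N - 2).choose (M - 1) = (M + N - 2).choose (N - 1) := by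
      have : M - 1 ≤ M + N - 2 := by omega
      rw [← Nat.choose_symm this]
      congr 1
      omega
    rw [h2, ← h3]
    omega
  obtain ⟨emb⟩ := Function.Embedding.nonempty_of_card_le hsymcard
  set m : Fin D → (Fin M →₀ ℕ) := fun j => Multiset.toFinsupp ↑(emb j) with hm
  have hminj : Function.Injective m := by
    intro j₁ j₂ hj
    apply emb.injective
    have := Multiset.toFinsupp.injective hj
    exact Sym.coe_injective this
  have hmdeg : ∀ j, (m j).degree = N - 1 := by
    intro j
    rw [hm, Finsupp.degree_apply]
    simp only [Multiset.toFinsupp_support, Multiset.toFinsupp_apply]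
    rw [Multiset.toFinset_sum_count_eq]
    exact (emb j).2
  -- the generic polynomial
  set L : Fin N → MvPolynomial (Fin M) (MvPolynomial σ' ℂ) :=
    fun k => ∑ j : Fin M, C (X (Sum.inr (j, k))) * X j with hL
  set Q : MvPolynomial (Fin M) (MvPolynomial σ' ℂ) :=
    ∑ i : Fin N, C (X (Sum.inl i)) * ∏ k ∈ Finset.univ.erase i, L k with hQ
  -- total degree of coefficients of products of the L's
  have hLdeg : ∀ (k : Fin N) (v : Fin M →₀ ℕ), ((L k).coeff v).totalDegree ≤ 1 := by
    intro k v
    rw [hL]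
    simp only [coeff_sum, coeff_C_mul]
    refine le_trans (totalDegree_finset_sum _ _) (Finset.sup_le fun j _ => ?_)
    rw [coeff_X']
    split_ifs with hv
    · rw [mul_one]
      exact le_of_eq (totalDegree_X _)
    · simp
  have hprodLdeg : ∀ (s : Finset (Fin N)) (v : Fin M →₀ ℕ),
      ((∏ k ∈ s, L k).coeff v).totalDegree ≤ s.card := by
    intro s
    induction s using Finset.cons_induction with
    | empty =>
      intro v
      rw [Finset.prod_empty]
      rw [coeff_one]
      split_ifs <;> simp
    | cons a s ha ih =>
      intro v
      rw [Finset.prod_cons, coeff_mul]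
      refine le_trans (totalDegree_finset_sum _ _) (Finset.sup_le fun p _ => ?_)
      refine le_trans (totalDegree_mul _ _) ?_
      rw [Finset.card_cons]
      have := hLdeg a p.1
      have := ih p.2
      omega
  have hQdeg : ∀ v : Fin M →₀ ℕ, (Q.coeff v).totalDegree ≤ N := by
    intro v
    rw [hQ]
    simp only [coeff_sum, coeff_C_mul]
    refine le_trans (totalDegree_finset_sum _ _) (Finset.sup_le fun i _ => ?_)
    refine le_trans (totalDegree_mul _ _) ?_
    have h1 : (X (Sum.inl i) : MvPolynomial σ' ℂ).totalDegree = 1 := totalDegree_X _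
    have h2 := hprodLdeg (Finset.univ.erase i) v
    have h3 : (Finset.univ.erase i).card = N - 1 := by
      rw [Finset.card_erase_of_mem (Finset.mem_univ i), Finset.card_univ, Fintype.card_fin]
    omega
  -- specialization
  have hmap : ∀ (γ : Fin N → ℂ) (α : Fin M → Fin N → ℂ),
      map (eval (Sum.elim γ fun p : Fin M × Fin N => α p.1 p.2)) Q =
        ∑ i : Fin N, MvPolynomial.C (γ i) *
          ∏ k ∈ Finset.univ.erase i, (∑ j : Fin M, MvPolynomial.C (α j k) * X j) := by
    intro γ α
    rw [hQ]
    rw [map_sum]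
    refine Finset.sum_congr rfl fun i _ => ?_
    rw [map_mul, map_C, map_prod]
    simp only [hL, map_sum, map_mul, map_C, map_X, eval_X, Sum.elim_inl, Sum.elim_inr]
  -- the coordinate polynomials
  set F : Fin D → MvPolynomial σ' ℂ := fun j => Q.coeff (m j) with hF
  refine not_polynomial_surjective (d := N) hN (by rw [hcardσ]; omega) F
    (fun j => hQdeg (m j)) ?_
  intro v
  set q : MvPolynomial (Fin M) ℂ := ∑ j, monomial (m j) (v j) with hq
  have hqhom : q.IsHomogeneous (N - 1) := by
    rw [hq]
    exact IsHomogeneous.sum _ _ _ fun j _ => isHomogeneous_monomial _ (hmdeg j)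
  obtain ⟨γ, α, hγα⟩ := hcon q hqhom
  refine ⟨Sum.elim γ fun p : Fin M × Fin N => α p.1 p.2, fun j => ?_⟩
  have h1 : eval (Sum.elim γ fun p : Fin M × Fin N => α p.1 p.2) (F j) =
      coeff (m j) (map (eval (Sum.elim γ fun p : Fin M × Fin N => α p.1 p.2)) Q) := by
    rw [coeff_map, hF]
  rw [h1, hmap, ← hγα, hq, coeff_sum]
  rw [Finset.sum_eq_single j]
  · rw [coeff_monomial, if_pos rfl]
  · intro j' _ hne
    rw [coeff_monomial, if_neg (fun hcontra => hne (hminj hcontra))]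
  · intro habs
    exact absurd (Finset.mem_univ j) habs
end

section
/- The polynomial x²y + x²z + xy² + xz² + y²z + yz² is irreducible in ℂ[x,y,z]. -/
open MvPolynomial

noncomputable section SymCubicAux

private def pX : Polynomial ℂ := Polynomial.X

lemma symcub_quartic_squarefree :
    Squarefree (pX^4 - 4*pX^3 - 6*pX^2 - 4*pX + 1) := by
  apply Polynomial.Separable.squarefree
  rw [Polynomial.separable_def]
  have hder : Polynomial.derivative (pX^4 - 4*pX^3 - 6*pX^2 - 4*pX + 1)
      = 4*pX^3 - 12*pX^2 - 12*pX - 4 := by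
    simp [pX, map_ofNat]
    ring
  rw [hder]
  refine ⟨Polynomial.C (48:ℂ)⁻¹ * (-4*pX^2 + 8*pX + 28),
    Polynomial.C (48:ℂ)⁻¹ * (pX^3 - 3*pX^2 - 11*pX - 5), ?_⟩
  have h48 : (Polynomial.C (48:ℂ)⁻¹) * (48 : Polynomial ℂ) = 1 := by
    rw [← map_ofNat (Polynomial.C : ℂ →+* Polynomial ℂ) 48, ← Polynomial.C_mul]
    norm_num
  have key : (-4*pX^2 + 8*pX + 28) * (pX^4 - 4*pX^3 - 6*pX^2 - 4*pX + 1)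
      + (pX^3 - 3*pX^2 - 11*pX - 5) * (4*pX^3 - 12*pX^2 - 12*pX - 4) = 48 := by ring
  calc Polynomial.C (48:ℂ)⁻¹ * (-4*pX^2 + 8*pX + 28) * (pX^4 - 4*pX^3 - 6*pX^2 - 4*pX + 1)
      + Polynomial.C (48:ℂ)⁻¹ * (pX^3 - 3*pX^2 - 11*pX - 5) * (4*pX^3 - 12*pX^2 - 12*pX - 4)
      = Polynomial.C (48:ℂ)⁻¹ * ((-4*pX^2 + 8*pX + 28) * (pX^4 - 4*pX^3 - 6*pX^2 - 4*pX + 1)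
        + (pX^3 - 3*pX^2 - 11*pX - 5) * (4*pX^3 - 12*pX^2 - 12*pX - 4)) := by ring
    _ = 1 := by rw [key, h48]

lemma symcub_quartic_not_sq (u : Polynomial ℂ) :
    u^2 ≠ pX^4 - 4*pX^3 - 6*pX^2 - 4*pX + 1 := by
  intro h
  have hdvd : u * u ∣ pX^4 - 4*pX^3 - 6*pX^2 - 4*pX + 1 := by
    rw [← h, sq]
  have hu : IsUnit u := symcub_quartic_squarefree u hdvd
  have hq : IsUnit (pX^4 - 4*pX^3 - 6*pX^2 - 4*pX + 1) := h ▸ hu.pow 2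
  have hdeg : (pX^4 - 4*pX^3 - 6*pX^2 - 4*pX + 1).natDegree = 4 := by
    unfold pX
    compute_degree!
  have := Polynomial.natDegree_eq_zero_of_isUnit hq
  omega

end SymCubicAux

noncomputable section SymCubicAux2

open MvPolynomial

private def symD : MvPolynomial (Fin 2) ℂ :=
  ((X 0)^2 + (X 1)^2)^2 - 4*(X 0 + X 1)*((X 0)^2 * X 1 + X 0 * (X 1)^2)

lemma symcub_D_not_sq (t : MvPolynomial (Fin 2) ℂ) : t^2 ≠ symD := by
  intro h
  apply symcub_quartic_not_sq (aeval ![pX, 1] t)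
  rw [← map_pow, h]
  simp [symD, pX, map_ofNat]
  ring

end SymCubicAux2

noncomputable section SymCubicAux3

open MvPolynomial

local notation "Rr" => MvPolynomial (Fin 2) ℂ
local notation "Kk" => FractionRing (MvPolynomial (Fin 2) ℂ)

lemma symcub_discrim_not_sq (s : Kk) :
    discrim (algebraMap Rr Kk (X 0 + X 1)) (algebraMap Rr Kk ((X 0)^2 + (X 1)^2))
      (algebraMap Rr Kk ((X 0)^2 * X 1 + X 0 * (X 1)^2)) ≠ s^2 := by
  intro h
  have hD : algebraMap Rr Kk symD = s^2 := by
    rw [← h]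
    simp only [discrim, symD, map_sub, map_mul, map_pow, map_add, map_ofNat]
  have hint : IsIntegral Rr s := by
    refine ⟨Polynomial.X^2 - Polynomial.C symD, Polynomial.monic_X_pow_sub_C _ two_ne_zero, ?_⟩
    simp [hD]
  obtain ⟨t, ht⟩ := IsIntegrallyClosed.isIntegral_iff.mp hint
  apply symcub_D_not_sq t
  apply IsFractionRing.injective Rr Kk
  rw [map_pow, ht, hD]

end SymCubicAux3

noncomputable section SymCubicAux4

open MvPolynomial

local notation "Rr" => MvPolynomial (Fin 2) ℂ
local notation "Kk" => FractionRing (MvPolynomial (Fin 2) ℂ)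

private def symP : Polynomial (MvPolynomial (Fin 2) ℂ) :=
  Polynomial.C (X 0 + X 1) * Polynomial.X^2 + Polynomial.C ((X 0)^2 + (X 1)^2) * Polynomial.X
    + Polynomial.C ((X 0)^2 * X 1 + X 0 * (X 1)^2)

lemma symP_primitive : symP.IsPrimitive := by
  intro r hr
  rw [Polynomial.C_dvd_iff_dvd_coeff] at hr
  have c2 : symP.coeff 2 = (X 0 + X 1 : Rr) := by
    simp only [symP, Polynomial.coeff_add, Polynomial.coeff_C_mul, Polynomial.coeff_X_pow,
      Polynomial.coeff_X, Polynomial.coeff_C]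
    norm_num
  have c1 : symP.coeff 1 = ((X 0)^2 + (X 1)^2 : Rr) := by
    simp only [symP, Polynomial.coeff_add, Polynomial.coeff_C_mul, Polynomial.coeff_X_pow,
      Polynomial.coeff_X, Polynomial.coeff_C]
    norm_num
  have h2 : r ∣ (X 0 + X 1 : Rr) := c2 ▸ hr 2
  have h1 : r ∣ ((X 0)^2 + (X 1)^2 : Rr) := c1 ▸ hr 1
  have hyz : r ∣ (2 * (X 0 * X 1) : Rr) := by
    have hd := dvd_sub (h2.mul_left (X 0 + X 1)) h1
    have e : ((X 0 + X 1) * (X 0 + X 1) - ((X 0)^2 + (X 1)^2) : Rr) = 2 * (X 0 * X 1) := by ring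
    rwa [e] at hd
  have h2inv : (C (2⁻¹:ℂ) : Rr) * 2 = 1 := by
    rw [← map_ofNat (C : ℂ →+* Rr) 2, ← C_mul]
    norm_num
  have hy2 : r ∣ ((X 0)^2 : Rr) := by
    have hd : r ∣ (C (2⁻¹:ℂ) * (2 * (X 0 * (X 0 + X 1)) - 2 * (X 0 * X 1)) : Rr) :=
      Dvd.dvd.mul_left (dvd_sub ((h2.mul_left (X 0)).mul_left 2) hyz) _
    have e : (C (2⁻¹:ℂ) * (2 * (X 0 * (X 0 + X 1)) - 2 * (X 0 * X 1)) : Rr) = (X 0)^2 := by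
      linear_combination (X 0 * (X 0 + X 1) - X 0 * X 1 : Rr) * h2inv
    rwa [e] at hd
  have hz2 : r ∣ ((X 1)^2 : Rr) := by
    have hd : r ∣ (C (2⁻¹:ℂ) * (2 * (X 1 * (X 0 + X 1)) - 2 * (X 0 * X 1)) : Rr) :=
      Dvd.dvd.mul_left (dvd_sub ((h2.mul_left (X 1)).mul_left 2) hyz) _
    have e : (C (2⁻¹:ℂ) * (2 * (X 1 * (X 0 + X 1)) - 2 * (X 0 * X 1)) : Rr) = (X 1)^2 := by
      linear_combination (X 1 * (X 0 + X 1) - X 0 * X 1 : Rr) * h2inv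
    rwa [e] at hd
  set ψ := finSuccEquiv ℂ 1 with hψ
  have hx2 : ψ ((X 0)^2 : Rr) = Polynomial.X^2 := by
    rw [map_pow, finSuccEquiv_X_zero]
  have hz2' : ψ ((X 1)^2 : Rr) = Polynomial.C (X 0)^2 := by
    rw [map_pow, show (X 1 : Rr) = X (Fin.succ 0) from rfl, finSuccEquiv_X_succ]
  have hdvd1 : ψ r ∣ Polynomial.X^2 := by
    rw [← hx2]; exact map_dvd ψ hy2
  obtain ⟨i, hi2, hassoc⟩ := (dvd_prime_pow Polynomial.prime_X 2).mp hdvd1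
  rcases Nat.eq_zero_or_pos i with hi0 | hipos
  · subst hi0
    rw [pow_zero] at hassoc
    have hu : IsUnit (ψ r) := associated_one_iff_isUnit.mp hassoc
    have := hu.map ψ.symm
    rwa [AlgEquiv.symm_apply_apply] at this
  · exfalso
    have hX : Polynomial.X ∣ ψ r :=
      (dvd_pow_self Polynomial.X hipos.ne').trans hassoc.symm.dvd
    have hXz : Polynomial.X ∣ Polynomial.C (X 0 : MvPolynomial (Fin 1) ℂ)^2 := by
      rw [← hz2']; exact hX.trans (map_dvd ψ hz2)
    rw [← Polynomial.C_pow, Polynomial.X_dvd_iff, Polynomial.coeff_C] at hXz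
    simp at hXz

end SymCubicAux4

noncomputable section SymCubicAux5

open MvPolynomial

local notation "Rr" => MvPolynomial (Fin 2) ℂ
local notation "Kk" => FractionRing (MvPolynomial (Fin 2) ℂ)

lemma symP_map_irreducible :
    Irreducible (symP.map (algebraMap Rr Kk)) := by
  set a := algebraMap Rr Kk (X 0 + X 1) with ha
  set b := algebraMap Rr Kk ((X 0)^2 + (X 1)^2) with hb
  set c := algebraMap Rr Kk ((X 0)^2 * X 1 + X 0 * (X 1)^2) with hc
  have hQ : symP.map (algebraMap Rr Kk)
      = Polynomial.C a * Polynomial.X^2 + Polynomial.C b * Polynomial.X + Polynomial.C c := by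
    simp only [symP, Polynomial.map_add, Polynomial.map_mul, Polynomial.map_pow,
      Polynomial.map_C, Polynomial.map_X, ha, hb, hc]
  have ha0 : a ≠ 0 := by
    rw [ha, ← map_zero (algebraMap Rr Kk)]
    intro h0
    have h1 := (IsFractionRing.injective Rr Kk) h0
    have h2 := congrArg (eval ![(1:ℂ), 0]) h1
    simp at h2
  have hdeg : (symP.map (algebraMap Rr Kk)).natDegree = 2 := by
    rw [hQ]
    compute_degree!
  rw [Polynomial.irreducible_iff_roots_eq_zero_of_degree_le_three (by omega) (by omega)]
  have hne : symP.map (algebraMap Rr Kk) ≠ 0 := by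
    intro h0
    rw [h0] at hdeg
    simp at hdeg
  rw [Multiset.eq_zero_iff_forall_notMem]
  intro x hx
  rw [Polynomial.mem_roots hne] at hx
  rw [Polynomial.IsRoot, hQ] at hx
  simp only [Polynomial.eval_add, Polynomial.eval_mul, Polynomial.eval_pow,
    Polynomial.eval_C, Polynomial.eval_X] at hx
  exact quadratic_ne_zero_of_discrim_ne_sq symcub_discrim_not_sq x (by linear_combination hx)

lemma symP_irreducible : Irreducible symP :=
  Polynomial.IsPrimitive.irreducible_of_irreducible_map_of_injective
    (IsFractionRing.injective Rr Kk) symP_primitive symP_map_irreducible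

end SymCubicAux5

/-- The fully symmetric polynomial `x²y + x²z + xy² + xz² + y²z + yz²` is irreducible in
`ℂ[x,y,z]`. -/
theorem symmetric_cubic_irreducible :
    Irreducible ((X 0) ^ 2 * X 1 + (X 0) ^ 2 * X 2 + X 0 * (X 1) ^ 2 + X 0 * (X 2) ^ 2
      + (X 1) ^ 2 * X 2 + X 1 * (X 2) ^ 2 : MvPolynomial (Fin 3) ℂ) := by
  have h : (finSuccEquiv ℂ 2) ((X 0) ^ 2 * X 1 + (X 0) ^ 2 * X 2 + X 0 * (X 1) ^ 2
      + X 0 * (X 2) ^ 2 + (X 1) ^ 2 * X 2 + X 1 * (X 2) ^ 2 : MvPolynomial (Fin 3) ℂ)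
      = symP := by
    have e1 : (X 1 : MvPolynomial (Fin 3) ℂ) = X (Fin.succ 0) := rfl
    have e2 : (X 2 : MvPolynomial (Fin 3) ℂ) = X (Fin.succ 1) := rfl
    rw [e1, e2]
    simp only [map_add, map_mul, map_pow, finSuccEquiv_X_zero, finSuccEquiv_X_succ, symP]
    ring
  exact (MulEquiv.irreducible_iff (finSuccEquiv ℂ 2)).mp (by rw [h]; exact symP_irreducible)
end

section
/- Let γ be an N×M complex matrix, let ℓᵢ = Σ_{j=1}^M γ_{i,j} xⱼ for i ∈ {1,…,N}, and let s₁,…,s_M be natural numbers with s₁+⋯+s_M = N. Let Γ̃_S be the N×N matrix whose columns are obtained by repeating, for each j ∈ {1,…,M}, the j-th column of γ exactly sⱼ times. Then the coefficient of the monomial x₁^{s₁}⋯x_M^{s_M} in the product ∏_{i=1}^N ℓᵢ equals perm(Γ̃_S) / (s₁!⋯s_M!), where perm denotes the matrix permanent. -/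
open MvPolynomial

/-- The permutations `σ` with `T ∘ σ = f` correspond to families of bijections between
the fibers of `f` and the fibers of `T`. -/
def permFiberEquiv {N M : ℕ} (T f : Fin N → Fin M) :
    {σ : Equiv.Perm (Fin N) // T ∘ σ = f} ≃
      ∀ j : Fin M, ({i : Fin N // f i = j} ≃ {i : Fin N // T i = j}) where
  toFun σ j :=
    { toFun := fun i => ⟨σ.1 i.1, by
        have h := congrFun σ.2 i.1
        simp only [Function.comp_apply] at h
        rw [h, i.2]⟩
      invFun := fun i => ⟨σ.1.symm i.1, by
        have h := congrFun σ.2 (σ.1.symm i.1)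
        simp only [Function.comp_apply, Equiv.apply_symm_apply] at h
        rw [← h, i.2]⟩
      left_inv := fun i => Subtype.ext (σ.1.symm_apply_apply i.1)
      right_inv := fun i => Subtype.ext (σ.1.apply_symm_apply i.1) }
  invFun g :=
    ⟨(Equiv.sigmaFiberEquiv f).symm.trans
      ((Equiv.sigmaCongrRight g).trans (Equiv.sigmaFiberEquiv T)), by
      funext i
      exact (g (f i) ⟨i, rfl⟩).2⟩
  left_inv σ := Subtype.ext (Equiv.ext fun i => rfl)
  right_inv g := by
    funext j
    ext ⟨i, hi⟩
    subst hi
    rfl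

lemma card_perm_fiber {N M : ℕ} (T f : Fin N → Fin M)
    (h : ∀ j, (Finset.univ.filter fun i => f i = j).card =
      (Finset.univ.filter fun i => T i = j).card) :
    (Finset.univ.filter fun σ : Equiv.Perm (Fin N) => T ∘ σ = f).card =
      ∏ j, Nat.factorial (Finset.univ.filter fun i => f i = j).card := by
  rw [← Fintype.card_subtype, Fintype.card_congr (permFiberEquiv T f), Fintype.card_pi]
  refine Finset.prod_congr rfl fun j _ => ?_
  rw [Fintype.card_equiv (Fintype.equivOfCardEq (by
    rw [Fintype.card_subtype, Fintype.card_subtype, h j]))]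
  rw [Fintype.card_subtype]

/-- Probability amplitudes of states in the class `[1^N]_M` as permanents (Eq. (21) of the
paper): for linear forms `ℓᵢ = Σⱼ γ_{i,j} xⱼ` and exponents `s₁+⋯+s_M = N`, the coefficient
of `x₁^{s₁}⋯x_M^{s_M}` in `∏ᵢ ℓᵢ` equals `perm(Γ̃_S)/(s₁!⋯s_M!)`, where the `N×N` matrix
`Γ̃_S` repeats the `j`-th column of `γ` exactly `sⱼ` times. -/
theorem coeff_prod_linear_forms_eq_permanent {N M : ℕ}
    (γ : Fin N → Fin M → ℂ) (s : Fin M → ℕ) (hs : ∑ j, s j = N)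
    (T : Fin N → Fin M)
    (hT : ∀ j : Fin M, (Finset.univ.filter fun c => T c = j).card = s j) :
    MvPolynomial.coeff (Finsupp.equivFunOnFinite.symm s)
        (∏ i : Fin N, ∑ j : Fin M, MvPolynomial.C (γ i j) * X j) =
      Matrix.permanent (Matrix.of fun i c : Fin N => γ i (T c)) /
        ((∏ j, Nat.factorial (s j) : ℕ) : ℂ) := by
  classical
  -- the condition on a function `f` that its fibers have cardinalities `s j`
  set cond : (Fin N → Fin M) → Prop :=
    fun f => ∀ j, (Finset.univ.filter fun i => f i = j).card = s j with hcond
  -- Step 1: expand the product of linear forms as a sum of monomials over functions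
  have hexp : (∏ i : Fin N, ∑ j : Fin M, MvPolynomial.C (γ i j) * X j)
      = ∑ f : Fin N → Fin M,
          monomial (∑ i, Finsupp.single (f i) 1) (∏ i, γ i (f i)) := by
    rw [Finset.prod_univ_sum, Fintype.piFinset_univ]
    refine Finset.sum_congr rfl fun f _ => ?_
    rw [monomial_sum_index, map_prod, ← Finset.prod_mul_distrib]
    exact Finset.prod_congr rfl fun i _ => by rw [C_mul_monomial, mul_one, C_mul_X_eq_monomial]
  -- the monomial equality condition
  have hkey : ∀ f : Fin N → Fin M,
      ((∑ i, Finsupp.single (f i) 1) = Finsupp.equivFunOnFinite.symm s) ↔ cond f := by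
    intro f
    rw [Finsupp.ext_iff]
    apply forall_congr'
    intro j
    rw [Finset.card_filter]
    simp [Finsupp.single_apply, Finsupp.finset_sum_apply]
  -- Step 2: the coefficient is a sum over functions with prescribed fiber sizes
  have hcoeff : MvPolynomial.coeff (Finsupp.equivFunOnFinite.symm s)
      (∏ i : Fin N, ∑ j : Fin M, MvPolynomial.C (γ i j) * X j)
      = ∑ f ∈ Finset.univ.filter cond, ∏ i, γ i (f i) := by
    rw [hexp, MvPolynomial.coeff_sum, Finset.sum_filter]
    refine Finset.sum_congr rfl fun f _ => ?_
    rw [coeff_monomial]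
    by_cases hf : cond f
    · rw [if_pos ((hkey f).mpr hf), if_pos hf]
    · rw [if_neg (fun h => hf ((hkey f).mp h)), if_neg hf]
  -- Step 3: the permanent as a sum over permutations, reindexed
  have hperm : Matrix.permanent (Matrix.of fun i c : Fin N => γ i (T c))
      = ∑ σ : Equiv.Perm (Fin N), ∏ k, γ k (T (σ k)) := by
    rw [Matrix.permanent]
    rw [← Equiv.sum_comp (Equiv.inv (Equiv.Perm (Fin N)))]
    refine Finset.sum_congr rfl fun σ _ => ?_
    rw [← Equiv.prod_comp σ (fun i => (Matrix.of fun i c : Fin N => γ i (T c))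
      ((Equiv.inv (Equiv.Perm (Fin N)) σ) i) i)]
    refine Finset.prod_congr rfl fun k _ => ?_
    simp
  -- Step 4: group permutations by the induced function `T ∘ σ`
  have hgroup : (∑ σ : Equiv.Perm (Fin N), ∏ k, γ k (T (σ k)))
      = ∑ f : Fin N → Fin M,
          ((Finset.univ.filter fun σ : Equiv.Perm (Fin N) => T ∘ σ = f).card : ℂ) *
            ∏ k, γ k (f k) := by
    rw [← Finset.sum_fiberwise Finset.univ (fun σ : Equiv.Perm (Fin N) => T ∘ σ)
      (fun σ => ∏ k, γ k (T (σ k)))]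
    refine Finset.sum_congr rfl fun f _ => ?_
    rw [Finset.sum_congr rfl fun σ hσ => (by
      rw [Finset.mem_filter] at hσ
      exact Finset.prod_congr rfl fun k _ => by rw [← congrFun hσ.2 k]; rfl :
        (∏ k, γ k (T (σ k))) = ∏ k, γ k (f k))]
    rw [Finset.sum_const, nsmul_eq_mul]
  -- if `T ∘ σ = f` then `f` has the prescribed fiber sizes
  have hfib : ∀ f : Fin N → Fin M, ¬ cond f →
      (Finset.univ.filter fun σ : Equiv.Perm (Fin N) => T ∘ σ = f) = ∅ := by
    intro f hf
    rw [Finset.filter_eq_empty_iff]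
    intro σ _ hσ
    apply hf
    intro j
    rw [← hσ, ← hT j]
    have : (Finset.univ.filter fun i => (T ∘ σ) i = j)
        = (Finset.univ.filter fun i => T i = j).map σ.symm.toEmbedding := by
      ext i
      simp only [Finset.mem_filter, Finset.mem_univ, true_and, Function.comp_apply,
        Finset.mem_map, Equiv.coe_toEmbedding]
      refine ⟨fun h => ⟨σ i, h, σ.symm_apply_apply i⟩, ?_⟩
      rintro ⟨a, ha, h⟩
      rw [← h]
      simpa using ha
    rw [this, Finset.card_map]
  -- Step 5: compute the grouped sum
  have hK : ((∏ j, Nat.factorial (s j) : ℕ) : ℂ) ≠ 0 := by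
    exact Nat.cast_ne_zero.mpr (Finset.prod_ne_zero_iff.mpr
      fun j _ => (Nat.factorial_pos (s j)).ne')
  have hperm2 : Matrix.permanent (Matrix.of fun i c : Fin N => γ i (T c))
      = ((∏ j, Nat.factorial (s j) : ℕ) : ℂ) *
          ∑ f ∈ Finset.univ.filter cond, ∏ i, γ i (f i) := by
    rw [hperm, hgroup, Finset.mul_sum, Finset.sum_filter]
    refine Finset.sum_congr rfl fun f _ => ?_
    by_cases hf : cond f
    · rw [if_pos hf, card_perm_fiber T f (fun j => by rw [hf j, hT j])]
      rw [Finset.prod_congr rfl fun j (_ : j ∈ Finset.univ) => by rw [hf j]]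
    · rw [if_neg hf, hfib f hf]
      simp
  rw [hcoeff, hperm2, mul_div_cancel_left₀ _ hK]
end
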